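/- For any positive definite matrix A, the derivative at X = A of the map X ↦ A # X equals Y ↦ Y/2; consequently the first derivative of Φ₃(A,X) = tr(A+X) − 2 tr(A # X) with respect to X vanishes at X = A. -/

import Mathlib

/-!
Write `S = A^{1/2}`. Since `S⁻¹ A S⁻¹ = 1`, we have `A # (A + tY) = S (1 + tC)^{1/2} S` with
`C = S⁻¹ Y S⁻¹` Hermitian. Diagonalising `C = U diag(d) U*`, for small `t` the square root is
`U diag(√(1 + t dₖ)) U*`, whose derivative at `0` is `U diag(dₖ / 2) U* = C / 2`; conjugating back
by `S` gives `Y / 2`. The trace statement follows as `tr Y - 2 tr (Y / 2) = 0`.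
-/

open scoped ComplexOrder
open MeasureTheory

/-- The positive semidefinite square root of a matrix (zero if not positive semidefinite). -/
noncomputable def msqrt {N : ℕ} (A : Matrix (Fin N) (Fin N) ℂ) : Matrix (Fin N) (Fin N) ℂ :=
  by classical exact if h : A.PosSemidef then (h.1.eigenvectorUnitary : Matrix (Fin N) (Fin N) ℂ) *
    Matrix.diagonal ((↑) ∘ (√·) ∘ h.1.eigenvalues) *
    (star (h.1.eigenvectorUnitary : Matrix (Fin N) (Fin N) ℂ)) else 0

/-- The Pusz–Woronowicz geometric mean `A # B = A^{1/2} (A^{-1/2} B A^{-1/2})^{1/2} A^{1/2}`. -/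
noncomputable def geom {N : ℕ} (A B : Matrix (Fin N) (Fin N) ℂ) : Matrix (Fin N) (Fin N) ℂ :=
  msqrt A * msqrt ((msqrt A)⁻¹ * B * (msqrt A)⁻¹) * msqrt A

/-- The logarithm of a Hermitian matrix, via the spectral theorem (zero if not Hermitian). -/
noncomputable def mlog {N : ℕ} (A : Matrix (Fin N) (Fin N) ℂ) : Matrix (Fin N) (Fin N) ℂ :=
  by classical exact if h : A.IsHermitian then h.cfc Real.log else 0

/-- The log Euclidean mean `exp((log A + log B)/2)`. -/
noncomputable def logEuclid {N : ℕ} (A B : Matrix (Fin N) (Fin N) ℂ) : Matrix (Fin N) (Fin N) ℂ :=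
  NormedSpace.exp ((2:ℂ)⁻¹ • (mlog A + mlog B))

open Matrix

section EntrywiseDeriv

variable {𝕜 𝔸 : Type*} [NontriviallyNormedField 𝕜] [NormedRing 𝔸] [NormedAlgebra 𝕜 𝔸]
  {m n o p : Type*} {x : 𝕜}

theorem hasDerivAt_mul_mul_apply [Fintype n] [Fintype o] {M : 𝕜 → Matrix n o 𝔸}
    {M' : Matrix n o 𝔸} (hM : ∀ i j, HasDerivAt (fun t => M t i j) (M' i j) x) (P : Matrix m n 𝔸)
    (Q : Matrix o p 𝔸) (i : m) (j : p) :
    HasDerivAt (fun t => (P * M t * Q) i j) ((P * M' * Q) i j) x := by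
  simp only [mul_apply, Finset.sum_mul]
  exact HasDerivAt.fun_sum fun k _ => HasDerivAt.fun_sum fun l _ =>
    ((hM l k).const_mul (P i l)).mul_const (Q k j)

theorem hasDerivAt_diagonal_apply [DecidableEq n] {v : 𝕜 → n → 𝔸} {v' : n → 𝔸}
    (hv : ∀ k, HasDerivAt (fun t => v t k) (v' k) x) (i j : n) :
    HasDerivAt (fun t => diagonal (v t) i j) (diagonal v' i j) x := by
  rcases eq_or_ne i j with rfl | hij
  · simpa only [diagonal_apply_eq] using hv i
  · simpa only [diagonal_apply_ne _ hij] using hasDerivAt_const x (0 : 𝔸)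

theorem hasDerivAt_trace [Fintype n] {M : 𝕜 → Matrix n n 𝔸} {M' : Matrix n n 𝔸}
    (hM : ∀ i j, HasDerivAt (fun t => M t i j) (M' i j) x) :
    HasDerivAt (fun t => (M t).trace) M'.trace x :=
  HasDerivAt.fun_sum fun i _ => hM i i

theorem hasDerivAt_add_smul_apply (B Y : Matrix m n 𝔸) (i : m) (j : n) :
    HasDerivAt (fun t => (B + t • Y) i j) (Y i j) x := by
  simpa using ((hasDerivAt_id x).smul_const (Y i j)).const_add (B i j)

end EntrywiseDeriv

section Sqrt

open scoped MatrixOrder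

variable {N : ℕ}

theorem msqrt_eq_cfcSqrt {A : Matrix (Fin N) (Fin N) ℂ} (hA : A.PosSemidef) :
    msqrt A = CFC.sqrt A := by
  classical
  rw [msqrt, dif_pos hA, CFC.sqrt_eq_cfc, cfc_nnreal_eq_real _ A, hA.1.cfc_eq,
    IsHermitian.cfc, Unitary.conjStarAlgAut_apply]
  congr 3
  funext k
  simp [Real.coe_toNNReal', max_eq_left (hA.eigenvalues_nonneg k)]

theorem msqrt_eq_of_mul_self {A B : Matrix (Fin N) (Fin N) ℂ} (hA : A.PosSemidef)
    (hB : B.PosSemidef) (h : B * B = A) : msqrt A = B := by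
  rw [msqrt_eq_cfcSqrt hA]
  exact (CFC.sqrt_eq_iff _ _ hA.nonneg hB.nonneg).mpr h

theorem Matrix.PosSemidef.posSemidef_msqrt {A : Matrix (Fin N) (Fin N) ℂ} (hA : A.PosSemidef) :
    (msqrt A).PosSemidef := by
  rw [msqrt_eq_cfcSqrt hA]
  exact nonneg_iff_posSemidef.mp (CFC.sqrt_nonneg A)

theorem msqrt_mul_self {A : Matrix (Fin N) (Fin N) ℂ} (hA : A.PosSemidef) :
    msqrt A * msqrt A = A := by
  rw [msqrt_eq_cfcSqrt hA]
  exact CFC.sqrt_mul_sqrt_self A hA.nonneg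

theorem Matrix.PosDef.isUnit_msqrt {A : Matrix (Fin N) (Fin N) ℂ} (hA : A.PosDef) :
    IsUnit (msqrt A) := by
  rw [msqrt_eq_cfcSqrt hA.posSemidef]
  exact (CFC.isUnit_sqrt_iff A hA.posSemidef.nonneg).mpr hA.isUnit

theorem msqrt_conj_diagonal {U : Matrix (Fin N) (Fin N) ℂ} (hU : U ∈ unitaryGroup (Fin N) ℂ)
    {w : Fin N → ℝ} (hw : ∀ k, 0 ≤ w k) :
    msqrt (U * diagonal (fun k => (w k : ℂ)) * star U) =
      U * diagonal (fun k => (√(w k) : ℂ)) * star U := by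
  have hPSD : ∀ {v : Fin N → ℝ}, (∀ k, 0 ≤ v k) →
      (U * diagonal (fun k => (v k : ℂ)) * star U).PosSemidef := fun hv =>
    (posSemidef_diagonal_iff.mpr fun k =>
      Complex.zero_le_real.mpr (hv k)).mul_mul_conjTranspose_same U
  refine msqrt_eq_of_mul_self (hPSD hw) (hPSD fun k => Real.sqrt_nonneg _) ?_
  calc _ = U * (diagonal (fun k => (√(w k) : ℂ)) * (star U * U) *
        diagonal (fun k => (√(w k) : ℂ))) * star U := by simp only [mul_assoc]
    _ = _ := by
      rw [(mem_unitaryGroup_iff').mp hU, mul_one, diagonal_mul_diagonal]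
      simp only [← Complex.ofReal_mul, Real.mul_self_sqrt (hw _)]

open Filter Topology in
theorem Matrix.IsHermitian.hasDerivAt_msqrt_one_add_smul {C : Matrix (Fin N) (Fin N) ℂ}
    (hC : C.IsHermitian) (i j : Fin N) :
    HasDerivAt (fun t : ℝ => msqrt (1 + t • C) i j) (((2 : ℂ)⁻¹ • C) i j) 0 := by
  set U : Matrix (Fin N) (Fin N) ℂ := (hC.eigenvectorUnitary : Matrix (Fin N) (Fin N) ℂ)
  set d := hC.eigenvalues
  have hC' : C = U * diagonal (fun k => (d k : ℂ)) * star U := hC.spectral_theorem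
  have hspec (t : ℝ) : 1 + t • C = U * diagonal (fun k => ((1 + t * d k : ℝ) : ℂ)) * star U := by
    have hD : diagonal (fun k => ((1 + t * d k : ℝ) : ℂ)) =
        1 + t • diagonal (fun k => (d k : ℂ)) := by
      rw [← diagonal_one, ← diagonal_smul, diagonal_add]
      congr 1; funext k; simp [Complex.real_smul]
    rw [hD, mul_add, add_mul, mul_one, (mem_unitaryGroup_iff).mp hC.eigenvectorUnitary.2,
      Matrix.mul_smul, Matrix.smul_mul, ← hC']
  have hpos : ∀ᶠ t : ℝ in 𝓝 0, ∀ k, 0 < 1 + t * d k := by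
    refine eventually_all.mpr fun k => ?_
    exact (continuous_const.add (continuous_id.mul continuous_const)).continuousAt.eventually
      (lt_mem_nhds (by simp : (0 : ℝ) < 1 + 0 * d k))
  have hsqrt (k : Fin N) :
      HasDerivAt (fun t : ℝ => (√(1 + t * d k) : ℂ)) ((2 : ℂ)⁻¹ * d k) 0 := by
    convert (((hasDerivAt_id' 0).mul_const (d k)).const_add 1).sqrt (by simp) |>.ofReal_comp
      using 1
    push_cast
    simp only [one_mul, zero_mul, add_zero, Real.sqrt_one, Complex.ofReal_one, mul_one]
    ring
  refine (hasDerivAt_mul_mul_apply (hasDerivAt_diagonal_apply hsqrt) U (star U) i j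
    |>.congr_of_eventuallyEq ?_).congr_deriv ?_
  · filter_upwards [hpos] with t ht
    rw [hspec, msqrt_conj_diagonal hC.eigenvectorUnitary.2 fun k => (ht k).le]
  · have hD : diagonal (fun k => (2 : ℂ)⁻¹ * d k) = (2 : ℂ)⁻¹ • diagonal (fun k => (d k : ℂ)) := by
      rw [← diagonal_smul]; rfl
    rw [hD, Matrix.mul_smul, Matrix.smul_mul, ← hC']

theorem Matrix.PosDef.geom_add {A : Matrix (Fin N) (Fin N) ℂ} (hA : A.PosDef)
    (B : Matrix (Fin N) (Fin N) ℂ) :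
    geom A (A + B) = msqrt A * msqrt (1 + (msqrt A)⁻¹ * B * (msqrt A)⁻¹) * msqrt A := by
  set S := msqrt A
  have hS := (isUnit_iff_isUnit_det _).mp hA.isUnit_msqrt
  have hA' : S⁻¹ * A * S⁻¹ = 1 := by
    rw [← msqrt_mul_self hA.posSemidef, ← mul_assoc, nonsing_inv_mul _ hS, one_mul,
      mul_nonsing_inv _ hS]
  rw [geom, mul_add, add_mul, hA']

theorem Matrix.PosDef.hasDerivAt_geom_self_add_smul {A : Matrix (Fin N) (Fin N) ℂ}
    (hA : A.PosDef) {Y : Matrix (Fin N) (Fin N) ℂ} (hY : Y.IsHermitian) (i j : Fin N) :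
    HasDerivAt (fun t : ℝ => geom A (A + t • Y) i j) (((2 : ℂ)⁻¹ • Y) i j) 0 := by
  set S := msqrt A
  have hS := (isUnit_iff_isUnit_det _).mp hA.isUnit_msqrt
  have hC : (S⁻¹ * Y * S⁻¹).IsHermitian := by
    have hSinv : (S⁻¹)ᴴ = S⁻¹ := hA.posSemidef.posSemidef_msqrt.1.inv.eq
    have := isHermitian_conjTranspose_mul_mul S⁻¹ hY
    rwa [hSinv] at this
  have hY' : S * ((2 : ℂ)⁻¹ • (S⁻¹ * Y * S⁻¹)) * S = (2 : ℂ)⁻¹ • Y := by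
    rw [Matrix.mul_smul, Matrix.smul_mul, ← mul_assoc, ← mul_assoc, mul_nonsing_inv _ hS,
      one_mul, mul_assoc, nonsing_inv_mul _ hS, mul_one]
  simp only [hA.geom_add, Matrix.mul_smul, Matrix.smul_mul]
  simpa only [hY'] using hasDerivAt_mul_mul_apply hC.hasDerivAt_msqrt_one_add_smul S S i j

end Sqrt

/-- The derivative at `X = A` of `X ↦ A # X` is `Y ↦ Y/2`; consequently the derivative of
`Φ₃(A,X) = tr(A+X) - 2 tr(A # X)` with respect to `X` vanishes at `X = A`. -/
theorem stmt10 {N : ℕ} (A : Matrix (Fin N) (Fin N) ℂ) (hA : A.PosDef)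
    (Y : Matrix (Fin N) (Fin N) ℂ) (hY : Y.IsHermitian) :
    (∀ i j, HasDerivAt (fun t : ℝ => geom A (A + t • Y) i j) (((2:ℂ)⁻¹ • Y) i j) 0) ∧
    HasDerivAt (fun t : ℝ => (A + (A + t • Y)).trace - 2 * (geom A (A + t • Y)).trace)
      0 0 := by
  have hgeom := hA.hasDerivAt_geom_self_add_smul hY
  refine ⟨hgeom, ?_⟩
  have hsum : ∀ i j, HasDerivAt (fun t : ℝ => (A + (A + t • Y)) i j) (Y i j) 0 := fun i j =>
    (hasDerivAt_add_smul_apply A Y i j).const_add (A i j)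
  refine ((hasDerivAt_trace hsum).sub ((hasDerivAt_trace hgeom).const_mul 2)).congr_deriv ?_
  rw [trace_smul, smul_eq_mul]
  ring
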